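/- arXiv:1904.10668 — 2 statements merged into one kernel-verified Lean document; each statement's English description precedes it below -/
import Mathlib

section
/- (Density of asymptotic lattices as ℏ → 0.) Let (𝓛_ℏ, 𝓘, B) be an asymptotic lattice. For every c ∈ B there exist a constant C > 0, ℏ₀ > 0, and a family (λ_ℏ)_{ℏ∈𝓘∩(0,ℏ₀]} with λ_ℏ ∈ 𝓛_ℏ and ‖λ_ℏ − c‖ ≤ C·ℏ for all ℏ ∈ 𝓘 ∩ (0,ℏ₀]. -/
open Set Metric
open scoped Topology

noncomputable section

/-- Euclidean space `ℝⁿ`. -/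
abbrev Eucl (n : ℕ) : Type := EuclideanSpace ℝ (Fin n)

/-- The point of `ℝⁿ` with integer coordinates `k`. -/
def intVec {n : ℕ} (k : Fin n → ℤ) : Eucl n := WithLp.toLp 2 (fun i => (k i : ℝ))

/-- The family `Gh ℏ` admits the asymptotic expansion `∑_j ℏ^j • Gc j` in the
`C^∞(U)` topology, uniformly for `ℏ ∈ 𝓘`. -/
def HasCinftyExpansion {n m : ℕ} (I : Set ℝ) (U : Set (Eucl n))
    (Gh : ℝ → Eucl n → Eucl m) (Gc : ℕ → Eucl n → Eucl m) : Prop :=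
  (∀ h ∈ I, ContDiffOn ℝ (⊤ : ℕ∞) (Gh h) U) ∧
  (∀ j : ℕ, ContDiffOn ℝ (⊤ : ℕ∞) (Gc j) U) ∧
  ∀ (N : ℕ) (K : Set (Eucl n)), K ⊆ U → IsCompact K → ∀ d : ℕ,
    ∃ C > 0, ∀ h ∈ I, ∀ x ∈ K,
      ‖iteratedFDerivWithin ℝ d
        (fun y => Gh h y - ∑ j ∈ Finset.range (N + 1), h ^ j • Gc j y) U x‖
        ≤ C * h ^ (N + 1)

/-- `G0` is a smooth diffeomorphism from `U` onto an open set containing the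
closure of `B`. -/
structure IsDiffeoOntoNbhd {n : ℕ} (G0 : Eucl n → Eucl n) (U B : Set (Eucl n)) : Prop where
  contDiffOn : ContDiffOn ℝ (⊤ : ℕ∞) G0 U
  injOn : InjOn G0 U
  isOpen_image : IsOpen (G0 '' U)
  closure_subset_image : closure B ⊆ G0 '' U
  smooth_inv : ∃ F0 : Eucl n → Eucl n, ContDiffOn ℝ (⊤ : ℕ∞) F0 (G0 '' U) ∧
      ∀ x ∈ U, F0 (G0 x) = x

/-- `(Gh, U)` (with expansion coefficients `Gc`) is an asymptotic chart for the
family `L` of subsets of `B`. -/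
structure IsAsymptoticChart {n : ℕ} (I : Set ℝ) (B : Set (Eucl n))
    (L : ℝ → Set (Eucl n)) (Gh : ℝ → Eucl n → Eucl n) (Gc : ℕ → Eucl n → Eucl n)
    (U : Set (Eucl n)) : Prop where
  isOpen_U : IsOpen U
  bounded_U : Bornology.IsBounded U
  expansion : HasCinftyExpansion I U Gh Gc
  diffeo : IsDiffeoOntoNbhd (Gc 0) U B
  orientation : ∀ x ∈ U, 0 < LinearMap.det ((fderiv ℝ (Gc 0) x) : Eucl n →ₗ[ℝ] Eucl n)
  bounds : ∃ C : ℕ → ℝ, (∀ N, 0 < C N) ∧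
    (∀ h ∈ I, ∀ lam ∈ L h, ∃ k : Fin n → ℤ, h • intVec k ∈ U ∧
      ∀ N : ℕ, ‖lam - Gh h (h • intVec k)‖ ≤ C N * h ^ N) ∧
    (∀ U₀ : Set (Eucl n), IsOpen U₀ → IsCompact (closure U₀) →
      closure U₀ ⊆ U ∩ (Gc 0) ⁻¹' B →
      ∃ h₁ > 0, ∀ h ∈ I, h ≤ h₁ → ∀ k : Fin n → ℤ, h • intVec k ∈ U₀ →
        ∃ lam ∈ L h, ∀ N : ℕ, ‖lam - Gh h (h • intVec k)‖ ≤ C N * h ^ N)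

/-- `(L, I, B)` is an asymptotic lattice. -/
structure IsAsymptoticLattice {n : ℕ} (L : ℝ → Set (Eucl n)) (I : Set ℝ)
    (B : Set (Eucl n)) : Prop where
  I_pos : I ⊆ Ioi 0
  I_accum : (0 : ℝ) ∈ closure I
  isOpen_B : IsOpen B
  bounded_B : Bornology.IsBounded B
  connected_B : IsConnected B
  simplyConnected_B : SimplyConnectedSpace B
  subset_B : ∀ h ∈ I, L h ⊆ B
  separation : ∃ h₀ > 0, ∃ ε₀ > 0, ∃ N₀ : ℕ, 1 ≤ N₀ ∧
    ∀ h ∈ I, h ≤ h₀ → ∀ l₁ ∈ L h, ∀ l₂ ∈ L h, l₁ ≠ l₂ → ε₀ * h ^ N₀ ≤ ‖l₁ - l₂‖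
  chart : ∃ (Gh : ℝ → Eucl n → Eucl n) (Gc : ℕ → Eucl n → Eucl n) (U : Set (Eucl n)),
    IsAsymptoticChart I B L Gh Gc U

/-- A good labelling of the lattice `L` associated with the asymptotic chart `(Gh, U)`. -/
def IsGoodLabelling {n : ℕ} (I : Set ℝ) (L : ℝ → Set (Eucl n))
    (Gh : ℝ → Eucl n → Eucl n) (U : Set (Eucl n))
    (k : ℝ → Eucl n → Fin n → ℤ) : Prop :=
  (∀ h ∈ I, ∀ lam ∈ L h, h • intVec (k h lam) ∈ U) ∧
  ∀ N : ℕ, ∃ C > 0, ∀ h ∈ I, ∀ lam ∈ L h,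
    ‖Gh h (h • intVec (k h lam)) - lam‖ ≤ C * h ^ N

/-- The index set `I` is `ℏ`-continuous. -/
def HContinuous (I : Set ℝ) : Prop :=
  ∀ ε > 0, ∃ h₀ > 0, ∀ h₁ ∈ closure I, 0 < h₁ → h₁ < h₀ →
    ∃ h₂ ∈ I, h₂ < h₁ ∧ 1 / h₂ - 1 / h₁ < ε

/-!
Write `c = G₀ x₀` with `x₀ ∈ U ∩ G₀⁻¹(B)`. Rounding `x₀` down to the grid `ℏℤⁿ` gives a point
`p = ℏk` with `‖p - x₀‖ ≤ √n ℏ`, so for small `ℏ` it stays in a fixed ball around `x₀` on which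
the chart covers the grid. The lattice point `λ` attached to `k` then satisfies
`‖λ - c‖ ≤ ‖λ - G_ℏ p‖ + ‖G_ℏ p - G₀ p‖ + ‖G₀ p - G₀ x₀‖`, and the three terms are `O(ℏ)` by the
covering property, the expansion to order `0`, and the local Lipschitz bound on `G₀`.
-/

lemma EuclideanSpace.norm_le_sqrt_card_mul {ι : Type*} [Fintype ι] {x : EuclideanSpace ℝ ι}
    {a : ℝ} (hx : ∀ i, |x i| ≤ a) : ‖x‖ ≤ √(Fintype.card ι) * a := by
  rcases isEmpty_or_nonempty ι with hι | ⟨⟨i₀⟩⟩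
  · simp [Subsingleton.elim x 0]
  have ha : 0 ≤ a := (abs_nonneg _).trans (hx i₀)
  calc ‖x‖ = √(∑ i, |x i| ^ 2) := by simp [EuclideanSpace.norm_eq]
    _ ≤ √(∑ _i : ι, a ^ 2) := by gcongr with i; exact hx i
    _ = √(Fintype.card ι) * a := by
      rw [Finset.sum_const, Finset.card_univ, nsmul_eq_mul, Real.sqrt_mul (Nat.cast_nonneg _),
        Real.sqrt_sq ha]

lemma abs_mul_floor_div_sub_le {h : ℝ} (hh : 0 < h) (x : ℝ) : |h * ⌊x / h⌋ - x| ≤ h := by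
  have hfract : x - h * ⌊x / h⌋ = h * Int.fract (x / h) := by
    rw [Int.fract, mul_sub, mul_div_cancel₀ _ hh.ne']
  rw [abs_sub_comm, hfract, abs_of_nonneg (mul_nonneg hh.le (Int.fract_nonneg _))]
  exact mul_le_of_le_one_right hh.le (Int.fract_lt_one _).le

lemma exists_dist_smul_intVec_le {n : ℕ} {h : ℝ} (hh : 0 < h) (x : Eucl n) :
    ∃ k : Fin n → ℤ, dist (h • intVec k) x ≤ √n * h := by
  refine ⟨fun i => ⌊x i / h⌋, ?_⟩
  have hcoord : ∀ i, |(h • intVec (fun i => ⌊x i / h⌋) - x) i| ≤ h := fun i => by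
    simpa [intVec] using abs_mul_floor_div_sub_le hh (x i)
  simpa [dist_eq_norm] using EuclideanSpace.norm_le_sqrt_card_mul hcoord

lemma HasCinftyExpansion.exists_norm_sub_le_mul {n m : ℕ} {I : Set ℝ} {U K : Set (Eucl n)}
    {Gh : ℝ → Eucl n → Eucl m} {Gc : ℕ → Eucl n → Eucl m} (hG : HasCinftyExpansion I U Gh Gc)
    (hKU : K ⊆ U) (hK : IsCompact K) :
    ∃ C > 0, ∀ h ∈ I, ∀ x ∈ K, ‖Gh h x - Gc 0 x‖ ≤ C * h := by
  obtain ⟨C, hC, hbound⟩ := hG.2.2 0 K hKU hK 0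
  refine ⟨C, hC, fun h hI x hx => ?_⟩
  simpa [norm_iteratedFDerivWithin_zero] using hbound h hI x hx

namespace IsAsymptoticChart

variable {n : ℕ} {I : Set ℝ} {B : Set (Eucl n)} {L : ℝ → Set (Eucl n)}
  {Gh : ℝ → Eucl n → Eucl n} {Gc : ℕ → Eucl n → Eucl n} {U : Set (Eucl n)}

lemma exists_mem_dist_le_of_mem_ball (hchart : IsAsymptoticChart I B L Gh Gc U) {x₀ : Eucl n}
    {r : ℝ} (hr : closedBall x₀ r ⊆ U ∩ Gc 0 ⁻¹' B) :
    ∃ C > 0, ∃ h₁ > 0, ∀ h ∈ I, h ≤ h₁ → ∀ k : Fin n → ℤ, h • intVec k ∈ ball x₀ r →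
      ∃ lam ∈ L h, dist lam (Gc 0 (h • intVec k)) ≤ C * h := by
  obtain ⟨Cb, hCb, -, hcover⟩ := hchart.bounds
  have hclosure : closure (ball x₀ r) ⊆ closedBall x₀ r := closure_ball_subset_closedBall
  obtain ⟨h₁, hh₁, hlam⟩ := hcover (ball x₀ r) isOpen_ball
    ((isCompact_closedBall x₀ r).of_isClosed_subset isClosed_closure hclosure)
    (hclosure.trans hr)
  obtain ⟨Ce, hCe, hexp⟩ := hchart.expansion.exists_norm_sub_le_mul
    (hr.trans inter_subset_left) (isCompact_closedBall x₀ r)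
  refine ⟨Cb 1 + Ce, add_pos (hCb 1) hCe, h₁, hh₁, fun h hI hh k hk => ?_⟩
  obtain ⟨lam, hlamL, hlamG⟩ := hlam h hI hh k hk
  refine ⟨lam, hlamL, ?_⟩
  calc dist lam (Gc 0 (h • intVec k))
      ≤ dist lam (Gh h (h • intVec k)) + dist (Gh h (h • intVec k)) (Gc 0 (h • intVec k)) :=
        dist_triangle _ _ _
    _ ≤ Cb 1 * h + Ce * h := by
        rw [dist_eq_norm, dist_eq_norm]
        gcongr
        · simpa using hlamG 1
        · exact hexp h hI _ (ball_subset_closedBall hk)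
    _ = (Cb 1 + Ce) * h := by ring

lemma exists_mem_dist_le_of_mem (hchart : IsAsymptoticChart I B L Gh Gc U) (hI : I ⊆ Ioi 0)
    (hB : IsOpen B) {x₀ : Eucl n} (hx₀ : x₀ ∈ U) (hx₀B : Gc 0 x₀ ∈ B) :
    ∃ C > 0, ∃ h₀ > 0, ∀ h ∈ I, h ≤ h₀ → ∃ lam ∈ L h, dist lam (Gc 0 x₀) ≤ C * h := by
  have hU : U ∈ 𝓝 x₀ := hchart.isOpen_U.mem_nhds hx₀
  obtain ⟨K, t, ht, hlip⟩ := ((hchart.diffeo.contDiffOn.contDiffAt hU).of_le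
    (by exact_mod_cast le_top)).exists_lipschitzOnWith
  have hpre : U ∩ Gc 0 ⁻¹' B ∈ 𝓝 x₀ :=
    (hchart.diffeo.contDiffOn.continuousOn.isOpen_inter_preimage hchart.isOpen_U
      hB).mem_nhds ⟨hx₀, hx₀B⟩
  obtain ⟨r, hr, hball⟩ := nhds_basis_closedBall.mem_iff.1 (Filter.inter_mem ht hpre)
  obtain ⟨C, hC, h₁, hh₁, hnear⟩ :=
    hchart.exists_mem_dist_le_of_mem_ball (hball.trans inter_subset_right)
  refine ⟨C + K * √n, by positivity, min h₁ (r / (√n + 1)), by positivity, fun h hIh hh => ?_⟩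
  obtain ⟨k, hk⟩ := exists_dist_smul_intVec_le (hI hIh) x₀
  set p := h • intVec k
  have hp : p ∈ ball x₀ r := by
    have : h * (√n + 1) ≤ r := (le_div_iff₀ (by positivity)).1 (hh.trans (min_le_right _ _))
    rw [mem_ball]
    nlinarith [mem_Ioi.1 (hI hIh)]
  obtain ⟨lam, hlamL, hlam⟩ := hnear h hIh (hh.trans (min_le_left _ _)) k hp
  refine ⟨lam, hlamL, ?_⟩
  calc dist lam (Gc 0 x₀) ≤ dist lam (Gc 0 p) + dist (Gc 0 p) (Gc 0 x₀) := dist_triangle _ _ _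
    _ ≤ C * h + K * (√n * h) := by
        gcongr
        exact (hlip.dist_le_mul p (hball (ball_subset_closedBall hp)).1 x₀
          (hball (mem_closedBall_self hr.le)).1).trans (by gcongr)
    _ = (C + K * √n) * h := by ring

end IsAsymptoticChart

theorem asymptotic_lattice_dense_general
    (n : ℕ) (L : ℝ → Set (Eucl n)) (I : Set ℝ) (B : Set (Eucl n))
    (hlat : IsAsymptoticLattice L I B) (c : Eucl n) (hc : c ∈ B) :
    ∃ C > 0, ∃ h₀ > 0, ∃ lamfam : ℝ → Eucl n,
      ∀ h ∈ I, h ≤ h₀ → lamfam h ∈ L h ∧ ‖lamfam h - c‖ ≤ C * h := by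
  obtain ⟨Gh, Gc, U, hchart⟩ := hlat.chart
  obtain ⟨x₀, hx₀, rfl⟩ := hchart.diffeo.closure_subset_image (subset_closure hc)
  obtain ⟨C, hC, h₀, hh₀, hnear⟩ :=
    hchart.exists_mem_dist_le_of_mem hlat.I_pos hlat.isOpen_B hx₀ hc
  choose! lamfam hmem hdist using hnear
  refine ⟨C, hC, h₀, hh₀, lamfam, fun h hI hh => ⟨hmem h hI hh, ?_⟩⟩
  simpa only [dist_eq_norm] using hdist h hI hh

/-- (Density of asymptotic lattices as `ℏ → 0`.) For every `c ∈ B` there is a family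
of lattice points at distance `O(ℏ)` from `c`. -/
theorem asymptotic_lattice_dense
    (n : ℕ) (hn : 1 ≤ n) (L : ℝ → Set (Eucl n)) (I : Set ℝ) (B : Set (Eucl n))
    (hlat : IsAsymptoticLattice L I B) (c : Eucl n) (hc : c ∈ B) :
    ∃ C > 0, ∃ h₀ > 0, ∃ lamfam : ℝ → Eucl n,
      ∀ h ∈ I, h ≤ h₀ → lamfam h ∈ L h ∧ ‖lamfam h - c‖ ≤ C * h :=
  asymptotic_lattice_dense_general n L I B hlat c hc
end
end

section
/- (Refined ℏ-continuity.) Let 𝓘 ⊂ (0,∞) be ℏ-continuous. Then for every ε > 0 and every real N > 2 there exists ℏ₀ > 0 such that for every ℏ₁ ∈ 𝓘 with ℏ₁ ≤ ℏ₀ there exists ℏ₂ ∈ 𝓘 with ℏ₂ < ℏ₁, 1/ℏ₂ − 1/ℏ₁ < ε, and ℏ₁ − ℏ₂ ≥ ℏ₁^N. -/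
/-!
Let `a = ℏ₁ - ℏ₁ ^ N` and let `m` be the least point of `closure 𝓘 ∩ [a, ℏ₁]`. Applying
`ℏ`-continuity at `m` gives `ℏ₂ ∈ 𝓘` with `ℏ₂ < m`, and `ℏ₂ < a` by minimality of `m`,
so `ℏ₁ - ℏ₂ > ℏ₁ ^ N`. The price is `1/m - 1/ℏ₁ ≤ 1/a - 1/ℏ₁ = ℏ₁ ^ (N-2) / (1 - ℏ₁ ^ (N-1))`,
which tends to `0` as `ℏ₁ → 0⁺` precisely because `N > 2`.
-/

open Filter Topology Set

lemma exists_mem_lt_of_forall_mem_closure_Icc {I : Set ℝ} {a x η : ℝ} (ha : 0 < a)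
    (hax : a ≤ x) (hx : x ∈ closure I)
    (hstep : ∀ m ∈ closure I, a ≤ m → m ≤ x → ∃ y ∈ I, y < m ∧ 1 / y - 1 / m < η) :
    ∃ y ∈ I, y < a ∧ 1 / y - 1 / x < η + (1 / a - 1 / x) := by
  obtain ⟨m, ⟨⟨ham, hmx⟩, hmI⟩, hleast⟩ :=
    (isCompact_Icc.inter_right isClosed_closure).exists_isLeast ⟨x, ⟨hax, le_rfl⟩, hx⟩
  obtain ⟨y, hyI, hym, hyη⟩ := hstep m hmI ham hmx
  have hya : y < a := not_le.1 fun hay =>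
    (hym.trans_le (hleast ⟨⟨hay, (hym.trans_le hmx).le⟩, subset_closure hyI⟩)).false
  have hma : 1 / m ≤ 1 / a := one_div_le_one_div_of_le ha ham
  exact ⟨y, hyI, hya, by linarith⟩

lemma tendsto_rpow_nhdsGT_zero {p : ℝ} (hp : 0 < p) :
    Tendsto (fun h : ℝ => h ^ p) (𝓝[>] 0) (𝓝 0) := by
  have hcont := (Real.continuousAt_rpow_const 0 p (Or.inr hp.le)).tendsto
  rw [Real.zero_rpow hp.ne'] at hcont
  exact hcont.mono_left nhdsWithin_le_nhds

lemma one_div_sub_rpow_sub_one_div_eq {h N : ℝ} (h0 : 0 < h) (h1 : h < 1) (hN : 1 < N) :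
    1 / (h - h ^ N) - 1 / h = h ^ (N - 2) / (1 - h ^ (N - 1)) := by
  have e1 : h ^ (N - 1) = h ^ (N - 2) * h := by
    rw [← Real.rpow_add_one h0.ne']; ring_nf
  have e2 : h ^ N = h ^ (N - 2) * h * h := by
    rw [← e1, ← Real.rpow_add_one h0.ne']; ring_nf
  have hlt : h ^ (N - 2) * h < 1 := e1 ▸ Real.rpow_lt_one h0.le h1 (by linarith)
  rw [e1, e2]
  generalize h ^ (N - 2) = t at hlt
  have hne : 1 - t * h ≠ 0 := by linarith
  rw [show h - t * h * h = h * (1 - t * h) by ring,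
    div_sub_div _ _ (mul_ne_zero h0.ne' hne) h0.ne',
    div_eq_div_iff (mul_ne_zero (mul_ne_zero h0.ne' hne) h0.ne') hne]
  ring

lemma tendsto_one_div_sub_rpow_sub_one_div {N : ℝ} (hN : 2 < N) :
    Tendsto (fun h : ℝ => 1 / (h - h ^ N) - 1 / h) (𝓝[>] 0) (𝓝 0) := by
  have hlim := (tendsto_rpow_nhdsGT_zero (sub_pos.2 hN)).div
    (tendsto_const_nhds.sub (tendsto_rpow_nhdsGT_zero (by linarith : (0 : ℝ) < N - 1)))
    (by norm_num : (1 : ℝ) - 0 ≠ 0)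
  rw [zero_div] at hlim
  refine hlim.congr' ?_
  filter_upwards [Ioo_mem_nhdsGT one_pos] with h hh
  exact (one_div_sub_rpow_sub_one_div_eq hh.1 hh.2 (by linarith)).symm

/-- (Refined `ℏ`-continuity.) If `I` is `ℏ`-continuous then for every `ε > 0` and
every real `N > 2` there is `ℏ₀ > 0` such that any `ℏ₁ ∈ I` with `ℏ₁ ≤ ℏ₀` admits
`ℏ₂ ∈ I` with `ℏ₂ < ℏ₁`, `1/ℏ₂ − 1/ℏ₁ < ε` and `ℏ₁ − ℏ₂ ≥ ℏ₁ ^ N`. -/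
theorem hContinuous_refined (I : Set ℝ) (hIpos : I ⊆ Set.Ioi (0 : ℝ))
    (hcont : HContinuous I) :
    ∀ ε > 0, ∀ N : ℝ, 2 < N → ∃ h₀ > 0, ∀ h₁ ∈ I, h₁ ≤ h₀ →
      ∃ h₂ ∈ I, h₂ < h₁ ∧ 1 / h₂ - 1 / h₁ < ε ∧ h₁ ^ N ≤ h₁ - h₂ := by
  intro ε hε N hN
  obtain ⟨δ, hδ, hstep⟩ := hcont (ε / 2) (half_pos hε)
  have hsmall : ∀ᶠ h in 𝓝[>] (0 : ℝ), h < δ ∧ h < 1 ∧ 1 / (h - h ^ N) - 1 / h < ε / 2 := by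
    filter_upwards [mem_nhdsWithin_of_mem_nhds (Iio_mem_nhds hδ),
      mem_nhdsWithin_of_mem_nhds (Iio_mem_nhds one_pos),
      (tendsto_one_div_sub_rpow_sub_one_div hN).eventually (gt_mem_nhds (half_pos hε))]
      with h hhδ hh1 hgap using ⟨hhδ, hh1, hgap⟩
  obtain ⟨u, hu, hu_small⟩ := (nhdsGT_basis (0 : ℝ)).eventually_iff.1 hsmall
  refine ⟨u / 2, half_pos hu, fun h₁ h₁I h₁le => ?_⟩
  have h₁pos : 0 < h₁ := hIpos h₁I
  obtain ⟨h₁δ, h₁one, hgap⟩ := hu_small ⟨h₁pos, by linarith⟩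
  have hpowpos : 0 < h₁ ^ N := Real.rpow_pos_of_pos h₁pos N
  have hpowlt : h₁ ^ N < h₁ := by
    simpa using Real.rpow_lt_rpow_of_exponent_gt h₁pos h₁one (by linarith : (1 : ℝ) < N)
  obtain ⟨h₂, h₂I, h₂lt, h₂gap⟩ :=
    exists_mem_lt_of_forall_mem_closure_Icc (a := h₁ - h₁ ^ N) (by linarith) (by linarith)
      (subset_closure h₁I) fun m hm ham hmx => hstep m hm (by linarith) (by linarith)
  exact ⟨h₂, h₂I, by linarith, by linarith, by linarith⟩
end
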